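/- arXiv:2508.02677 — 2 statements merged into one kernel-verified Lean document; each statement's English description precedes it below -/
import Mathlib

section
/- Let C > 0, ν > 0 and m > -1 be real constants, set β = 2m/(m+1), and let f : ℝ → ℝ be three times continuously differentiable and satisfy the Falkner–Skan equation f‴(s) + f(s)·f″(s) + β·(1 − (f′(s))²) = 0 for all s ≥ 0. Define η(x,y) = √(C(m+1)/(2ν)) · x^((m-1)/2) · y, u(x,y) = C · x^m · f′(η(x,y)), and v(x,y) = −√(Cν(m+1)/2) · x^((m-1)/2) · ( f(η(x,y)) + ((m-1)/(m+1)) · η(x,y) · f′(η(x,y)) ). Then the boundary-layer momentum equation with the external pressure-gradient forcing, u·∂u/∂x + v·∂u/∂y = m·C²·x^(2m−1) + ν·∂²u/∂y², holds at every point (x,y) with x > 0 and y ≥ 0. -/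
/-- If `f` is three times continuously differentiable and satisfies the
Falkner–Skan equation `f‴ + f·f″ + β·(1 − (f′)²) = 0` on `[0,∞)`, with
`β = 2m/(m+1)`, then the similarity velocity field
`u(x,y) = C·x^m·f′(η(x,y))`,
`v(x,y) = −√(Cν(m+1)/2)·x^((m-1)/2)·( f(η) + ((m-1)/(m+1))·η·f′(η) )`,
`η(x,y) = √(C(m+1)/(2ν))·x^((m-1)/2)·y`,
satisfies the boundary-layer momentum equation
`u·∂u/∂x + v·∂u/∂y = m·C²·x^(2m−1) + ν·∂²u/∂y²`
at every point `(x,y)` with `x > 0` and `y ≥ 0`. -/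
theorem falknerSkan_momentum_equation
    (C ν m β : ℝ) (hC : 0 < C) (hν : 0 < ν) (hm : -1 < m)
    (hβ : β = 2 * m / (m + 1))
    (f : ℝ → ℝ) (hf : ContDiff ℝ 3 f)
    (hFS : ∀ s : ℝ, 0 ≤ s →
      deriv (deriv (deriv f)) s + f s * deriv (deriv f) s + β * (1 - (deriv f s) ^ 2) = 0)
    (η u v : ℝ → ℝ → ℝ)
    (hη : ∀ x y : ℝ, η x y = Real.sqrt (C * (m + 1) / (2 * ν)) * x ^ ((m - 1) / 2) * y)
    (hu : ∀ x y : ℝ, u x y = C * x ^ m * deriv f (η x y))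
    (hv : ∀ x y : ℝ, v x y = -(Real.sqrt (C * ν * (m + 1) / 2) * x ^ ((m - 1) / 2) *
        (f (η x y) + ((m - 1) / (m + 1)) * η x y * deriv f (η x y)))) :
    ∀ x : ℝ, 0 < x → ∀ y : ℝ, 0 ≤ y →
      ∃ dudx dudy d2udy2 : ℝ,
        HasDerivAt (fun x' => u x' y) dudx x ∧
        HasDerivAt (fun y' => u x y') dudy y ∧
        HasDerivAt (fun y' => deriv (fun y'' => u x y'') y') d2udy2 y ∧
        u x y * dudx + v x y * dudy = m * C ^ 2 * x ^ (2 * m - 1) + ν * d2udy2 := by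
  -- differentiability of derivatives of f
  have h0 : ContDiff ℝ (2+1) f := by norm_num at hf ⊢; exact hf
  have h1 : ContDiff ℝ 2 (deriv f) := (contDiff_succ_iff_deriv.mp h0).2.2
  have h0' : ContDiff ℝ (1+1) (deriv f) := by norm_num at h1 ⊢; exact h1
  have h2 : ContDiff ℝ 1 (deriv (deriv f)) := (contDiff_succ_iff_deriv.mp h0').2.2
  have hd1 : Differentiable ℝ (deriv f) := h1.differentiable (by norm_num)
  have hd2 : Differentiable ℝ (deriv (deriv f)) := h2.differentiable (by norm_num)
  intro x hx y hy
  have hm1 : (0:ℝ) < m + 1 := by linarith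
  set A := Real.sqrt (C * (m + 1) / (2 * ν)) with hA
  set P := x ^ ((m - 1) / 2) with hPdef
  have hAnn : (0:ℝ) ≤ C * (m + 1) / (2 * ν) := by positivity
  have hApos : 0 < A := Real.sqrt_pos.mpr (by positivity)
  have hPpos : 0 < P := Real.rpow_pos_of_pos hx _
  set E := A * P * y with hE
  have hE0 : 0 ≤ E := by positivity
  -- the u-slice functions
  have huy : (fun y' => u x y') = fun y' => C * x ^ m * deriv f (A * P * y') := by
    funext y'; rw [hu, hη]
  have hux : (fun x' => u x' y) = fun x' => C * x' ^ m * deriv f (A * x' ^ ((m-1)/2) * y) := by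
    funext x'; rw [hu, hη]
  -- dudy
  have hlin : ∀ y' : ℝ, HasDerivAt (fun t : ℝ => A * P * t) (A * P) y' := by
    intro y'; simpa using (hasDerivAt_id y').const_mul (A * P)
  have hDy : ∀ y' : ℝ, HasDerivAt (fun t => u x t)
      (C * x ^ m * (deriv (deriv f) (A * P * y') * (A * P))) y' := by
    intro y'
    rw [huy]
    exact (((hd1 (A * P * y')).hasDerivAt.comp y' (hlin y'))).const_mul (C * x ^ m)
  have hderiv_eq : (deriv fun y'' => u x y'') =
      fun y' => C * x ^ m * (deriv (deriv f) (A * P * y') * (A * P)) := by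
    funext y'; exact (hDy y').deriv
  have hD2 : HasDerivAt (fun y' => deriv (fun y'' => u x y'') y')
      (C * x ^ m * (deriv (deriv (deriv f)) E * (A * P) * (A * P))) y := by
    rw [hderiv_eq]
    have := (((hd2 (A * P * y)).hasDerivAt.comp y (hlin y)).mul_const (A * P)).const_mul
      (C * x ^ m)
    simpa [hE] using this
  -- dudx
  have hxm : HasDerivAt (fun x' : ℝ => x' ^ m) (m * x ^ (m - 1)) x :=
    Real.hasDerivAt_rpow_const (Or.inl hx.ne')
  have hxp : HasDerivAt (fun x' : ℝ => A * x' ^ ((m-1)/2) * y)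
      (A * ((m-1)/2 * x ^ ((m-1)/2 - 1)) * y) x :=
    ((Real.hasDerivAt_rpow_const (p := (m-1)/2) (Or.inl hx.ne')).const_mul A).mul_const y
  have hDx : HasDerivAt (fun x' => u x' y)
      (C * (m * x ^ (m - 1)) * deriv f E
        + C * x ^ m * (deriv (deriv f) E * (A * ((m-1)/2 * x ^ ((m-1)/2 - 1)) * y))) x := by
    rw [hux]
    have hcomp : HasDerivAt (fun x' : ℝ => deriv f (A * x' ^ ((m-1)/2) * y))
        (deriv (deriv f) E * (A * ((m-1)/2 * x ^ ((m-1)/2 - 1)) * y)) x := by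
      have := (hd1 (A * x ^ ((m-1)/2) * y)).hasDerivAt.comp x hxp
      exact this
    have := (hxm.const_mul C).mul hcomp
    exact this
  refine ⟨_, _, _, hDx, hDy y, hD2, ?_⟩
  -- now the algebra
  rw [hu, hv, hη]
  have hFSE := hFS E hE0
  have H1 : A * A * (2 * ν) = C * (m + 1) := by
    rw [hA, Real.mul_self_sqrt hAnn]; field_simp
  have H2 : β * (m + 1) = 2 * m := by rw [hβ]; field_simp
  have H4 : x ^ ((m-1)/2 - 1) * x = P := by
    rw [hPdef]
    nth_rewrite 2 [← Real.rpow_one x]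
    rw [← Real.rpow_add hx]; norm_num
  have H5 : ((m - 1) / (m + 1)) * (m + 1) = m - 1 := by field_simp
  have hsB : Real.sqrt (C * ν * (m + 1) / 2) = ν * A := by
    have hsq : (ν * A) ^ 2 = C * ν * (m + 1) / 2 := by
      rw [mul_pow, hA, Real.sq_sqrt hAnn]; field_simp
    rw [← hsq, Real.sqrt_sq (by positivity)]
  have hxmP : x ^ m = x * (P * P) := by
    rw [hPdef, ← Real.rpow_add hx, show (m-1)/2 + (m-1)/2 = m - 1 by ring,
      show m = (m-1) + 1 by ring, Real.rpow_add_one hx.ne']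
    ring
  have hQP : x ^ (m - 1) = P * P := by
    rw [hPdef, ← Real.rpow_add hx]; ring_nf
  have hTP : x ^ (2*m - 1) = x * (P * P * P * P) := by
    rw [hPdef, ← Real.rpow_add hx, ← Real.rpow_add hx, ← Real.rpow_add hx,
      show (m-1)/2 + (m-1)/2 + (m-1)/2 + (m-1)/2 = 2*m - 2 by ring,
      show 2*m - 1 = (2*m - 2) + 1 by ring, Real.rpow_add_one hx.ne']
    ring
  rw [hsB, hxmP, hQP, hTP, ← hPdef, ← hE]
  linear_combination
    (-(C * (x * (P*P*P*P)) / 2) * (f E * deriv (deriv f) E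
        + ((m-1)/(m+1)) * A * P * y * deriv f E * deriv (deriv f) E
        + deriv (deriv (deriv f)) E)) * H1
    + (C^2 * (x * (P*P*P*P)) * (1 - (deriv f E)^2) / 2) * H2
    + (-(C^2 * (x * (P*P*P*P)) * (m+1) / 2)) * hFSE
    + (C^2 * (m-1)/2 * A * y * deriv f E * deriv (deriv f) E * (x * (P*P*P*P))) * H4
    + (-(C^2/2 * A * x * (P*P*P*P*P) * y * deriv f E * deriv (deriv f) E)) * H5
end

section
/- Let C > 0, ν > 0 and m > -1 be real constants, set β = 2m/(m+1), and let f : ℝ → ℝ be three times continuously differentiable. Define η(x,y) = √(C(m+1)/(2ν)) · x^((m-1)/2) · y, u(x,y) = C · x^m · f′(η(x,y)), and v(x,y) = −√(Cν(m+1)/2) · x^((m-1)/2) · ( f(η(x,y)) + ((m-1)/(m+1)) · η(x,y) · f′(η(x,y)) ). If the boundary-layer momentum equation u·∂u/∂x + v·∂u/∂y = m·C²·x^(2m−1) + ν·∂²u/∂y² holds at every point (x,y) with x > 0 and y > 0, then the Falkner–Skan equation f‴(s) + f(s)·f″(s) + β·(1 − (f′(s))²) = 0 holds for every s > 0. -/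
/-- (Converse direction.) If the Falkner–Skan similarity velocity field
`u(x,y) = C·x^m·f′(η(x,y))`,
`v(x,y) = −√(Cν(m+1)/2)·x^((m-1)/2)·( f(η) + ((m-1)/(m+1))·η·f′(η) )`,
`η(x,y) = √(C(m+1)/(2ν))·x^((m-1)/2)·y`,
satisfies the boundary-layer momentum equation
`u·∂u/∂x + v·∂u/∂y = m·C²·x^(2m−1) + ν·∂²u/∂y²`
at every point `(x,y)` with `x > 0` and `y > 0`, then `f` satisfies the Falkner–Skan
equation `f‴(s) + f(s)·f″(s) + β·(1 − (f′(s))²) = 0` for every `s > 0`,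
where `β = 2m/(m+1)`. -/
theorem falknerSkan_equation_from_momentum
    (C ν m β : ℝ) (hC : 0 < C) (hν : 0 < ν) (hm : -1 < m)
    (hβ : β = 2 * m / (m + 1))
    (f : ℝ → ℝ) (hf : ContDiff ℝ 3 f)
    (η u v : ℝ → ℝ → ℝ)
    (hη : ∀ x y : ℝ, η x y = Real.sqrt (C * (m + 1) / (2 * ν)) * x ^ ((m - 1) / 2) * y)
    (hu : ∀ x y : ℝ, u x y = C * x ^ m * deriv f (η x y))
    (hv : ∀ x y : ℝ, v x y = -(Real.sqrt (C * ν * (m + 1) / 2) * x ^ ((m - 1) / 2) *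
        (f (η x y) + ((m - 1) / (m + 1)) * η x y * deriv f (η x y))))
    (hmom : ∀ x : ℝ, 0 < x → ∀ y : ℝ, 0 < y →
      u x y * deriv (fun x' => u x' y) x + v x y * deriv (fun y' => u x y') y
        = m * C ^ 2 * x ^ (2 * m - 1)
          + ν * deriv (fun y' => deriv (fun y'' => u x y'') y') y) :
    ∀ s : ℝ, 0 < s →
      deriv (deriv (deriv f)) s + f s * deriv (deriv f) s + β * (1 - (deriv f s) ^ 2) = 0 := by
  intro s hs
  have hm1 : (0:ℝ) < m + 1 := by linarith
  set a := Real.sqrt (C * (m + 1) / (2 * ν)) with ha_def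
  set b := Real.sqrt (C * ν * (m + 1) / 2) with hb_def
  have haarg : (0:ℝ) < C * (m + 1) / (2 * ν) := div_pos (mul_pos hC hm1) (by linarith)
  have hbarg : (0:ℝ) < C * ν * (m + 1) / 2 := by positivity
  have ha : 0 < a := Real.sqrt_pos.mpr haarg
  have ha2 : a ^ 2 = C * (m + 1) / (2 * ν) := Real.sq_sqrt haarg.le
  have hab : a * b = C * (m + 1) / 2 := by
    rw [ha_def, hb_def, ← Real.sqrt_mul haarg.le]
    rw [show C * (m + 1) / (2 * ν) * (C * ν * (m + 1) / 2) = (C * (m + 1) / 2) ^ 2 by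
      field_simp]
    exact Real.sqrt_sq (by positivity)
  set y := s / a with hy_def
  have hy : 0 < y := div_pos hs ha
  have hsa : a * y = s := by rw [hy_def]; field_simp [ha.ne']
  -- smoothness pieces
  have hf2 : ContDiff ℝ 2 (deriv f) := by
    have h3 : ContDiff ℝ (2+1 : ℕ) f := by exact_mod_cast hf
    exact ((contDiff_succ_iff_deriv.mp (by exact_mod_cast h3)).2).2
  have hf1 : ContDiff ℝ 1 (deriv (deriv f)) := by
    have h2 : ContDiff ℝ (1+1 : ℕ) (deriv f) := by exact_mod_cast hf2
    exact ((contDiff_succ_iff_deriv.mp (by exact_mod_cast h2)).2).2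
  have hd2 : ∀ t : ℝ, HasDerivAt (deriv f) (deriv (deriv f) t) t := fun t =>
    ((hf2.differentiable (by norm_num)) t).hasDerivAt
  have hd3 : ∀ t : ℝ, HasDerivAt (deriv (deriv f)) (deriv (deriv (deriv f)) t) t := fun t =>
    ((hf1.differentiable (by norm_num)) t).hasDerivAt
  -- the y-slice of u at x = 1
  have huy : (fun y' : ℝ => u 1 y') = fun y' : ℝ => C * deriv f (a * y') := by
    funext y'
    rw [hu, hη]
    simp [Real.one_rpow]
  -- ∂u/∂y at (1, y)
  have hDy : ∀ t : ℝ, deriv (fun y' : ℝ => u 1 y') t = C * a * deriv (deriv f) (a * t) := by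
    intro t
    rw [huy]
    have : HasDerivAt (fun y' : ℝ => C * deriv f (a * y'))
        (C * (deriv (deriv f) (a * t) * a)) t := by
      have h1 : HasDerivAt (fun y' : ℝ => a * y') a t := by
        simpa using (hasDerivAt_id t).const_mul a
      exact ((hd2 (a * t)).comp t h1).const_mul C
    rw [this.deriv]; ring
  -- ∂²u/∂y² at (1, y)
  have hDyy : deriv (fun y' : ℝ => deriv (fun y'' : ℝ => u 1 y'') y') y
      = C * a ^ 2 * deriv (deriv (deriv f)) s := by
    have e : (fun y' : ℝ => deriv (fun y'' : ℝ => u 1 y'') y')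
        = fun y' : ℝ => C * a * deriv (deriv f) (a * y') := funext hDy
    rw [e]
    have h1 : HasDerivAt (fun y' : ℝ => a * y') a y := by
      simpa using (hasDerivAt_id y).const_mul a
    have : HasDerivAt (fun y' : ℝ => C * a * deriv (deriv f) (a * y'))
        (C * a * (deriv (deriv (deriv f)) (a * y) * a)) y :=
      ((hd3 (a * y)).comp y h1).const_mul (C * a)
    rw [this.deriv, hsa]; ring
  -- ∂u/∂x at (1, y)
  have hDx : deriv (fun x' : ℝ => u x' y) 1
      = C * (m * deriv f s + ((m - 1) / 2) * s * deriv (deriv f) s) := by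
    have hux : (fun x' : ℝ => u x' y)
        = fun x' : ℝ => C * x' ^ m * deriv f (a * x' ^ ((m - 1) / 2) * y) := by
      funext x'; rw [hu, hη]
    rw [hux]
    have h1 : HasDerivAt (fun x' : ℝ => x' ^ m) (m * (1:ℝ) ^ (m - 1)) 1 :=
      Real.hasDerivAt_rpow_const (Or.inl one_ne_zero)
    have h2 : HasDerivAt (fun x' : ℝ => x' ^ ((m - 1) / 2))
        ((m - 1) / 2 * (1:ℝ) ^ ((m - 1) / 2 - 1)) 1 :=
      Real.hasDerivAt_rpow_const (Or.inl one_ne_zero)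
    have h3 : HasDerivAt (fun x' : ℝ => a * x' ^ ((m - 1) / 2) * y)
        (a * ((m - 1) / 2 * (1:ℝ) ^ ((m - 1) / 2 - 1)) * y) 1 :=
      (h2.const_mul a).mul_const y
    have h3' : HasDerivAt (fun x' : ℝ => a * x' ^ ((m - 1) / 2) * y)
        (a * ((m - 1) / 2) * y) 1 := by
      simpa [Real.one_rpow] using h3
    have h4 : HasDerivAt (fun x' : ℝ => deriv f (a * x' ^ ((m - 1) / 2) * y))
        (deriv (deriv f) (a * (1:ℝ) ^ ((m - 1) / 2) * y) * (a * ((m - 1) / 2) * y)) 1 := by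
      have := (hd2 (a * (1:ℝ) ^ ((m - 1) / 2) * y)).comp 1 h3'
      simpa [Real.one_rpow, Function.comp_def] using this
    have h4' : HasDerivAt (fun x' : ℝ => deriv f (a * x' ^ ((m - 1) / 2) * y))
        (deriv (deriv f) s * (a * ((m - 1) / 2) * y)) 1 := by
      simpa [Real.one_rpow, hsa] using h4
    have h5 : HasDerivAt (fun x' : ℝ => C * x' ^ m * deriv f (a * x' ^ ((m - 1) / 2) * y))
        (C * (m * (1:ℝ) ^ (m - 1)) * deriv f (a * (1:ℝ) ^ ((m - 1) / 2) * y)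
          + C * (1:ℝ) ^ m * (deriv (deriv f) s * (a * ((m - 1) / 2) * y))) 1 :=
      (h1.const_mul C).mul h4'
    rw [h5.deriv]
    have h6 : a * ((m - 1) / 2) * y = ((m - 1) / 2) * s := by rw [← hsa]; ring
    simp only [Real.one_rpow, mul_one, one_mul, hsa, h6]
    ring
  -- values at (1, y)
  have hηv : η 1 y = s := by rw [hη]; simp [Real.one_rpow, hsa]
  have huv : u 1 y = C * deriv f s := by rw [hu, hηv]; simp [Real.one_rpow]
  have hvv : v 1 y = -(b * (f s + ((m - 1) / (m + 1)) * s * deriv f s)) := by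
    rw [hv, hηv]; simp [Real.one_rpow]
  -- momentum equation at (1, y)
  have E := hmom 1 one_pos y hy
  rw [huv, hvv, hDx, hDy y, hDyy, hsa, Real.one_rpow] at E
  -- algebra
  set F1 := f s
  set F2 := deriv f s
  set F3 := deriv (deriv f) s
  set F4 := deriv (deriv (deriv f)) s
  have hνa2 : ν * a ^ 2 = C * (m + 1) / 2 := by
    rw [ha2]; field_simp
  have hm1' : m + 1 ≠ 0 := ne_of_gt hm1
  field_simp at E
  rw [hβ]
  field_simp
  have key : C ^ 2 * (m + 1) * ((F4 + F1 * F3) * (m + 1) + 2 * m * (1 - F2 ^ 2)) = 0 := by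
    linear_combination (-C) * E
      - (2 * C * F3 * (F1 * (m + 1) + (m - 1) * s * F2)) * hab
      - (2 * C * (m + 1) * F4) * hνa2
  have hC2 : C ^ 2 * (m + 1) ≠ 0 := by positivity
  rw [mul_zero]; exact (mul_eq_zero.mp key).resolve_left hC2
end
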